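/- Let k ≥ 2 and let μ, ν be linear functionals on the Sekine algebra A_k with coefficient families (α, κ) and (β, ω). For a functional μ and p, q ∈ ℤ_k define μ(ρ_{p,q}) := Σ_{m,n∈ℤ_k} η^{mp+nq} α_{m,n}, μ(σ_{p,q}) := Σ_{i∈ℤ_k} η^{iq} κ_{i,i+p}, and the 2×2 matrix μ̂(π_{p,q}) := [[μ(ρ_{p,q}), μ(σ_{p,−q})], [μ(σ_{p,q}), μ(ρ_{p,−q})]]. Then for all p, q ∈ ℤ_k, (μ⋆ν)^(π_{p,q}) = μ̂(π_{p,q}) · ν̂(π_{p,q}) (matrix product), where μ⋆ν is the convolution. -/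
import Mathlib


/-! Statement 13: the Fourier transform at the representations `π_{p,q}`
turns convolution into matrix multiplication:
`(μ⋆ν)^(π_{p,q}) = μ̂(π_{p,q}) · ν̂(π_{p,q})`. -/

open Finset

noncomputable section

/-- `η^t` for `t ∈ ℤ_k`, where `η = exp(2πi/k)`. -/
def etac (k : ℕ) [NeZero k] (t : ZMod k) : ℂ :=
  Complex.exp (2 * (Real.pi : ℂ) * Complex.I * (t.val : ℂ) / (k : ℂ))

/-- `μ(ρ_{p,q}) = Σ_{m,n} η^{mp+nq} α_{m,n}` for a functional with coefficient
family `(α, κ)`. -/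
def rhoVal (k : ℕ) [NeZero k] (α : ZMod k → ZMod k → ℂ) (p q : ZMod k) : ℂ :=
  ∑ m : ZMod k, ∑ n : ZMod k, etac k (m * p + n * q) * α m n

/-- `μ(σ_{p,q}) = Σ_i η^{iq} κ_{i,i+p}`. -/
def sigVal (k : ℕ) [NeZero k] (κ : ZMod k → ZMod k → ℂ) (p q : ZMod k) : ℂ :=
  ∑ i : ZMod k, etac k (i * q) * κ i (i + p)

/-- The Fourier transform `μ̂(π_{p,q})` of the functional with coefficient
family `(α, κ)` at the representation `π_{p,q}`. -/
def fourierMat (k : ℕ) [NeZero k] (α κ : ZMod k → ZMod k → ℂ) (p q : ZMod k) :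
    Matrix (Fin 2) (Fin 2) ℂ :=
  !![rhoVal k α p q, sigVal k κ p (-q); sigVal k κ p q, rhoVal k α p (-q)]

/-- The `d`-coefficients of the convolution `μ ⋆ ν` of functionals with
coefficient families `(a, κ)` and `(b, ω)`. -/
def convA (k : ℕ) [NeZero k] (a κ b ω : ZMod k → ZMod k → ℂ) :
    ZMod k → ZMod k → ℂ := fun i j =>
  (∑ m : ZMod k, ∑ n : ZMod k, a m n * b (i - m) (j - n))
    + (1 / (k : ℂ)) * ∑ r : ZMod k, ∑ s : ZMod k,
        etac k (i * (r - s)) * (κ r s * ω (r + j) (s + j))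

/-- The `e`-coefficients of the convolution `μ ⋆ ν` of functionals with
coefficient families `(a, κ)` and `(b, ω)`. -/
def convK (k : ℕ) [NeZero k] (a κ b ω : ZMod k → ZMod k → ℂ) :
    ZMod k → ZMod k → ℂ := fun r s =>
  ∑ i : ZMod k, ∑ j : ZMod k,
    etac k (i * (s - r)) * (a i j * ω (r + j) (s + j) + b i j * κ (r - j) (s - j))


section
variable {k : ℕ} [NeZero k]

lemma zeta_pow_k : Complex.exp (2 * Real.pi * Complex.I / k) ^ k = 1 :=
  (Complex.isPrimitiveRoot_exp k (NeZero.ne k)).pow_eq_one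

lemma zeta_pow_mod (n : ℕ) :
    Complex.exp (2 * Real.pi * Complex.I / k) ^ (n % k)
      = Complex.exp (2 * Real.pi * Complex.I / k) ^ n := by
  conv_rhs => rw [← Nat.div_add_mod n k]
  rw [pow_add, pow_mul, zeta_pow_k, one_pow, one_mul]

lemma etac_eq_pow (t : ZMod k) :
    etac k t = Complex.exp (2 * Real.pi * Complex.I / k) ^ t.val := by
  rw [← Complex.exp_nat_mul, etac]
  congr 1
  ring

lemma etac_add (s t : ZMod k) : etac k (s + t) = etac k s * etac k t := by
  rw [etac_eq_pow, etac_eq_pow, etac_eq_pow, ← pow_add, ZMod.val_add, zeta_pow_mod]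

lemma etac_zero : etac k (0 : ZMod k) = 1 := by
  simp [etac]

lemma sum_etac_mul (t : ZMod k) :
    ∑ i : ZMod k, etac k (i * t) = if t = 0 then (k : ℂ) else 0 := by
  by_cases ht : t = 0
  · simp [ht, etac_zero, ZMod.card]
  · rw [if_neg ht]
    set ζ := Complex.exp (2 * Real.pi * Complex.I / k) with hζ
    have hx : ∀ i : ZMod k, etac k (i * t) = (ζ ^ t.val) ^ i.val := by
      intro i
      rw [etac_eq_pow, ZMod.val_mul, zeta_pow_mod, pow_mul']
    simp only [hx]
    have hsum : ∑ i : ZMod k, (ζ ^ t.val) ^ i.val = ∑ j ∈ Finset.range k, (ζ ^ t.val) ^ j := by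
      refine Finset.sum_nbij' (fun i => i.val) (fun j => (j : ZMod k)) ?_ ?_ ?_ ?_ ?_
      · intro i _; exact Finset.mem_range.mpr (ZMod.val_lt i)
      · intro j _; exact Finset.mem_univ _
      · intro i _; exact ZMod.natCast_rightInverse i
      · intro j hj; exact ZMod.val_cast_of_lt (Finset.mem_range.mp hj)
      · intro i _; rfl
    rw [hsum]
    have hne : ζ ^ t.val ≠ 1 := by
      intro h
      have := (Complex.isPrimitiveRoot_exp k (NeZero.ne k)).pow_eq_one_iff_dvd t.val |>.mp h
      have h0 := Nat.eq_zero_of_dvd_of_lt this ?_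
      · exact ht (ZMod.val_eq_zero t |>.mp h0)
      · exact ZMod.val_lt t
    rw [geom_sum_eq hne, ← pow_mul, mul_comm, pow_mul, zeta_pow_k, one_pow, sub_self, zero_div]
section
variable {k : ℕ} [NeZero k]

lemma sum_comm3 (F : ZMod k → ZMod k → ZMod k → ℂ) :
    ∑ i : ZMod k, ∑ j : ZMod k, ∑ n : ZMod k, F i j n
      = ∑ n : ZMod k, ∑ i : ZMod k, ∑ j : ZMod k, F i j n := by
  have h : ∀ i, ∑ j : ZMod k, ∑ n : ZMod k, F i j n = ∑ n : ZMod k, ∑ j : ZMod k, F i j n :=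
    fun i => Finset.sum_comm
  simp only [h]
  exact Finset.sum_comm

lemma sum_comm3' (F : ZMod k → ZMod k → ZMod k → ℂ) :
    ∑ i : ZMod k, ∑ r : ZMod k, ∑ s : ZMod k, F i r s
      = ∑ r : ZMod k, ∑ s : ZMod k, ∑ i : ZMod k, F i r s := by
  rw [Finset.sum_comm (f := fun i r => ∑ s : ZMod k, F i r s)]
  exact Finset.sum_congr rfl fun r _ => Finset.sum_comm

lemma sum_swap4 (F : ZMod k → ZMod k → ZMod k → ZMod k → ℂ) :
    ∑ i : ZMod k, ∑ j : ZMod k, ∑ m : ZMod k, ∑ n : ZMod k, F i j m n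
      = ∑ m : ZMod k, ∑ n : ZMod k, ∑ i : ZMod k, ∑ j : ZMod k, F i j m n := by
  rw [sum_comm3 (fun i j m => ∑ n : ZMod k, F i j m n)]
  exact Finset.sum_congr rfl fun m _ => sum_comm3 _

lemma sum_swap4' (F : ZMod k → ZMod k → ZMod k → ZMod k → ℂ) :
    ∑ i : ZMod k, ∑ j : ZMod k, ∑ r : ZMod k, ∑ s : ZMod k, F i j r s
      = ∑ j : ZMod k, ∑ r : ZMod k, ∑ s : ZMod k, ∑ i : ZMod k, F i j r s := by
  rw [Finset.sum_comm (f := fun i j => ∑ r : ZMod k, ∑ s : ZMod k, F i j r s)]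
  exact Finset.sum_congr rfl fun j _ => sum_comm3' _

lemma sum_shift (f : ZMod k → ℂ) (c : ZMod k) : ∑ i : ZMod k, f (i + c) = ∑ i : ZMod k, f i :=
  Equiv.sum_comp (Equiv.addRight c) f

lemma sum_unshift (f : ZMod k → ℂ) (c : ZMod k) : ∑ i : ZMod k, f (i - c) = ∑ i : ZMod k, f i :=
  Equiv.sum_comp (Equiv.subRight c) f

end


section
variable {k : ℕ} [NeZero k]

lemma sum_shift' (f : ZMod k → ℂ) (c : ZMod k) : ∑ i : ZMod k, f (c + i) = ∑ i : ZMod k, f i :=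
  Equiv.sum_comp (Equiv.addLeft c) f

lemma lemA (a κ b ω : ZMod k → ZMod k → ℂ) (p q : ZMod k) :
    rhoVal k (convA k a κ b ω) p q
      = rhoVal k a p q * rhoVal k b p q + sigVal k κ p (-q) * sigVal k ω p q := by
  have hk0 : (k : ℂ) ≠ 0 := Nat.cast_ne_zero.mpr (NeZero.ne k)
  rw [rhoVal]
  simp only [convA, mul_add, Finset.sum_add_distrib]
  congr 1
  · calc ∑ i : ZMod k, ∑ j : ZMod k,
          etac k (i*p + j*q) * ∑ m : ZMod k, ∑ n : ZMod k, a m n * b (i-m) (j-n)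
        = ∑ i : ZMod k, ∑ j : ZMod k, ∑ m : ZMod k, ∑ n : ZMod k,
            etac k (i*p + j*q) * (a m n * b (i-m) (j-n)) := by
          simp only [Finset.mul_sum]
      _ = ∑ m : ZMod k, ∑ n : ZMod k, ∑ i : ZMod k, ∑ j : ZMod k,
            etac k (i*p + j*q) * (a m n * b (i-m) (j-n)) := sum_swap4 _
      _ = ∑ m : ZMod k, ∑ n : ZMod k, ∑ i : ZMod k, ∑ j : ZMod k,
            (etac k (m*p + n*q) * a m n) * (etac k (i*p + j*q) * b i j) := by
          refine Finset.sum_congr rfl fun m _ => Finset.sum_congr rfl fun n _ => ?_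
          rw [← sum_shift (fun i => ∑ j : ZMod k,
                etac k (i*p + j*q) * (a m n * b (i-m) (j-n))) m]
          refine Finset.sum_congr rfl fun i _ => ?_
          rw [← sum_shift (fun j => etac k ((i+m)*p + j*q) * (a m n * b (i+m-m) (j-n))) n]
          refine Finset.sum_congr rfl fun j _ => ?_
          rw [show i+m-m = i by ring, show j+n-n = j by ring,
              show (i+m)*p + (j+n)*q = (m*p + n*q) + (i*p + j*q) by ring, etac_add]
          ring
      _ = rhoVal k a p q * rhoVal k b p q := by
          simp only [rhoVal, Finset.sum_mul, Finset.mul_sum]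
          exact sum_swap4 _
  · calc ∑ i : ZMod k, ∑ j : ZMod k, etac k (i*p + j*q) *
          ((1/(k:ℂ)) * ∑ r : ZMod k, ∑ s : ZMod k, etac k (i*(r-s)) * (κ r s * ω (r+j) (s+j)))
        = (1/(k:ℂ)) * ∑ i : ZMod k, ∑ j : ZMod k, ∑ r : ZMod k, ∑ s : ZMod k,
            etac k (i*p + j*q) * (etac k (i*(r-s)) * (κ r s * ω (r+j) (s+j))) := by
          simp only [Finset.mul_sum]
          refine Finset.sum_congr rfl fun i _ => Finset.sum_congr rfl fun j _ =>
            Finset.sum_congr rfl fun r _ => Finset.sum_congr rfl fun s _ => ?_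
          ring
      _ = (1/(k:ℂ)) * ∑ j : ZMod k, ∑ r : ZMod k, ∑ s : ZMod k,
            (etac k (j*q) * (κ r s * ω (r+j) (s+j))) * ∑ i : ZMod k, etac k (i*(p+(r-s))) := by
          congr 1
          rw [sum_swap4' (fun i j r s =>
            etac k (i*p + j*q) * (etac k (i*(r-s)) * (κ r s * ω (r+j) (s+j))))]
          refine Finset.sum_congr rfl fun j _ => Finset.sum_congr rfl fun r _ =>
            Finset.sum_congr rfl fun s _ => ?_
          rw [Finset.mul_sum]
          refine Finset.sum_congr rfl fun i _ => ?_
          rw [show i*p + j*q = j*q + i*p by ring, etac_add,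
              show i*(p+(r-s)) = i*p + i*(r-s) by ring, etac_add]
          ring
      _ = (1/(k:ℂ)) * ∑ j : ZMod k, ∑ r : ZMod k,
            (etac k (j*q) * (κ r (r+p) * ω (r+j) (r+p+j))) * (k:ℂ) := by
          congr 1
          refine Finset.sum_congr rfl fun j _ => Finset.sum_congr rfl fun r _ => ?_
          have hif : ∀ s : ZMod k,
              (etac k (j*q) * (κ r s * ω (r+j) (s+j))) * (∑ i : ZMod k, etac k (i*(p+(r-s))))
                = (etac k (j*q) * (κ r s * ω (r+j) (s+j))) * (if p+(r-s) = 0 then (k:ℂ) else 0) := by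
            intro s; rw [sum_etac_mul]
          simp only [hif]
          rw [Finset.sum_eq_single (r+p)]
          · rw [if_pos (by ring : p + (r - (r+p)) = 0)]
          · intro s _ hs
            rw [if_neg, mul_zero]
            intro h; exact hs (by linear_combination -h)
          · intro h; exact absurd (Finset.mem_univ _) h
      _ = ∑ j : ZMod k, ∑ r : ZMod k, etac k (j*q) * (κ r (r+p) * ω (r+j) (r+p+j)) := by
          rw [Finset.mul_sum]
          refine Finset.sum_congr rfl fun j _ => ?_
          rw [Finset.mul_sum]
          refine Finset.sum_congr rfl fun r _ => ?_
          field_simp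
      _ = sigVal k κ p (-q) * sigVal k ω p q := by
          rw [sigVal, sigVal, Finset.sum_mul_sum, Finset.sum_comm]
          refine Finset.sum_congr rfl fun r _ => ?_
          rw [← sum_shift' (fun y => (etac k (r*(-q)) * κ r (r+p)) * (etac k (y*q) * ω y (y+p))) r]
          refine Finset.sum_congr rfl fun j _ => ?_
          rw [show (j:ZMod k)*q = r*(-q) + (r+j)*q by ring, etac_add,
              show r+p+j = r+j+p by ring]
          ring

lemma lemB (a κ b ω : ZMod k → ZMod k → ℂ) (p q : ZMod k) :
    sigVal k (convK k a κ b ω) p q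
      = sigVal k κ p q * rhoVal k b p q + rhoVal k a p (-q) * sigVal k ω p q := by
  rw [sigVal]
  simp only [convK, add_sub_cancel_left, mul_add, Finset.mul_sum, Finset.sum_add_distrib]
  rw [add_comm (sigVal k κ p q * rhoVal k b p q) (rhoVal k a p (-q) * sigVal k ω p q)]
  congr 1
  · calc ∑ i : ZMod k, ∑ m : ZMod k, ∑ j : ZMod k,
          etac k (i*q) * (etac k (m*p) * (a m j * ω (i+j) (i+p+j)))
        = ∑ m : ZMod k, ∑ j : ZMod k, ∑ i : ZMod k,
          etac k (i*q) * (etac k (m*p) * (a m j * ω (i+j) (i+p+j))) := sum_comm3' _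
      _ = ∑ m : ZMod k, ∑ j : ZMod k,
          (etac k (m*p + j*(-q)) * a m j) * ∑ i : ZMod k, etac k (i*q) * ω i (i+p) := by
          refine Finset.sum_congr rfl fun m _ => Finset.sum_congr rfl fun j _ => ?_
          rw [← sum_unshift (fun i =>
            etac k (i*q) * (etac k (m*p) * (a m j * ω (i+j) (i+p+j)))) j]
          rw [Finset.mul_sum]
          refine Finset.sum_congr rfl fun i _ => ?_
          rw [show i - j + j = i by ring, show i - j + p + j = i + p by ring,
              show (i-j)*q = j*(-q) + i*q by ring, etac_add, etac_add (m*p) (j*(-q))]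
          ring
      _ = rhoVal k a p (-q) * sigVal k ω p q := by
          simp only [rhoVal, sigVal, Finset.sum_mul]
  · calc ∑ i : ZMod k, ∑ m : ZMod k, ∑ j : ZMod k,
          etac k (i*q) * (etac k (m*p) * (b m j * κ (i-j) (i+p-j)))
        = ∑ m : ZMod k, ∑ j : ZMod k, ∑ i : ZMod k,
          etac k (i*q) * (etac k (m*p) * (b m j * κ (i-j) (i+p-j))) := sum_comm3' _
      _ = ∑ m : ZMod k, ∑ j : ZMod k,
          (etac k (m*p + j*q) * b m j) * ∑ i : ZMod k, etac k (i*q) * κ i (i+p) := by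
          refine Finset.sum_congr rfl fun m _ => Finset.sum_congr rfl fun j _ => ?_
          rw [← sum_shift (fun i =>
            etac k (i*q) * (etac k (m*p) * (b m j * κ (i-j) (i+p-j)))) j]
          rw [Finset.mul_sum]
          refine Finset.sum_congr rfl fun i _ => ?_
          rw [show i + j - j = i by ring, show i + j + p - j = i + p by ring,
              show (i+j)*q = j*q + i*q by ring, etac_add, etac_add (m*p) (j*q)]
          ring
      _ = rhoVal k b p q * sigVal k κ p q := by
          simp only [rhoVal, sigVal, Finset.sum_mul]
      _ = sigVal k κ p q * rhoVal k b p q := mul_comm _ _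

end

theorem stmt13 (k : ℕ) [NeZero k] (hk : 2 ≤ k)
    (a κ b ω : ZMod k → ZMod k → ℂ) (p q : ZMod k) :
    fourierMat k (convA k a κ b ω) (convK k a κ b ω) p q =
      fourierMat k a κ p q * fourierMat k b ω p q := by
  have h00 := lemA a κ b ω p q
  have h11 := lemA a κ b ω p (-q)
  have h10 := lemB a κ b ω p q
  have h01 := lemB a κ b ω p (-q)
  rw [neg_neg] at h11 h01
  rw [fourierMat, fourierMat, fourierMat, Matrix.mul_fin_two, h00, h11, h10, h01]
  congr 1 <;> ring
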